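/- arXiv:1309.0300 — 2 statements merged into one kernel-verified Lean document; each statement's English description precedes it below -/
import Mathlib

section
/- Let U and A satisfy the hypotheses of the Zappa-Szép right LCM lemma. If F ⊆ U is a foundation set in U, then {(u, e_A) : u ∈ F} is a foundation set in U ⋈ A. -/
/-! A common right multiple `w = u s = p.1 t` in `U` lifts to `U ⋈ A`: `(u, 1)` divides `(w, b)` for
every `b`, and since `act p.2` is onto, `t = p.2 · t'` for some `t'`, so `p (t', 1) = (w, p.2|_{t'})`. -/

def IsRightMul {P : Type*} (mul : P → P → P) (p r : P) : Prop := ∃ q, mul p q = r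

def IsRCM {P : Type*} (mul : P → P → P) (p q r : P) : Prop :=
  IsRightMul mul p r ∧ IsRightMul mul q r

def IsRLCM {P : Type*} (mul : P → P → P) (p q r : P) : Prop :=
  IsRCM mul p q r ∧ ∀ s, IsRCM mul p q s → IsRightMul mul r s

section ZappaSzep

variable {U A : Type*} [Monoid U] [Monoid A] (act : A → U → U) (res : A → U → A)

/-- Multiplication of `U ⋈ A`, with `act a v = a · v` and `res a v = a|_v`. -/
def zsMul : U × A → U × A → U × A := fun p q => (p.1 * act p.2 q.1, res p.2 q.1 * q.2)

theorem isRightMul_zsMul_one {act res} (B1 : ∀ u, act 1 u = u) (B7 : ∀ u, res 1 u = 1)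
    {u v : U} (huv : IsRightMul (· * ·) u v) (b : A) :
    IsRightMul (zsMul act res) (u, 1) (v, b) := by
  obtain ⟨s, rfl⟩ := huv
  exact ⟨(s, b), by simp only [zsMul, B1, B7, one_mul]⟩

theorem isRightMul_zsMul_of_act_eq (p : U × A) {t t' : U} (ht : act p.2 t' = t) :
    IsRightMul (zsMul act res) p (p.1 * t, res p.2 t') :=
  ⟨(t', 1), by simp only [zsMul, ht, mul_one]⟩

theorem exists_isRCM_zsMul_one {act res} (B1 : ∀ u, act 1 u = u) (B7 : ∀ u, res 1 u = 1)
    (hsurj : ∀ a, Function.Surjective (act a)) {u : U} (p : U × A)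
    (hup : ∃ w, IsRCM (· * ·) u p.1 w) : ∃ w, IsRCM (zsMul act res) (u, 1) p w := by
  obtain ⟨w, huw, t, rfl⟩ := hup
  obtain ⟨t', ht'⟩ := hsurj p.2 t
  exact ⟨_, isRightMul_zsMul_one B1 B7 huw _, isRightMul_zsMul_of_act_eq act res p ht'⟩

end ZappaSzep

theorem stmt15_general
    {U A : Type*} [Monoid U] [Monoid A]
    (act : A → U → U) (res : A → U → A)
    (B1 : ∀ u, act 1 u = u)
    (B7 : ∀ u, res 1 u = 1)
    (hbij : ∀ a : A, Function.Bijective (act a))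
    (F : Finset U) (hF : ∀ v : U, ∃ u ∈ F, ∃ w, IsRCM (· * ·) u v w) :
    let zmul : U × A → U × A → U × A :=
      fun p q => (p.1 * act p.2 q.1, res p.2 q.1 * q.2)
    ∀ p : U × A, ∃ u ∈ F, ∃ w, IsRCM zmul (u, (1 : A)) p w := by
  intro zmul p
  obtain ⟨u, hu, hup⟩ := hF p.1
  exact ⟨u, hu, exists_isRCM_zsMul_one B1 B7 (fun a => (hbij a).2) p hup⟩

theorem stmt15
    {U A : Type*} [Monoid U] [Monoid A]
    (hU : ∀ a b c : U, a * b = a * c → b = c)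
    (hA : ∀ a b c : A, a * b = a * c → b = c)
    (act : A → U → U) (res : A → U → A)
    (B1 : ∀ u, act 1 u = u)
    (B2 : ∀ a b u, act (a * b) u = act a (act b u))
    (B3 : ∀ a, act a 1 = 1)
    (B4 : ∀ a, res a 1 = a)
    (B5 : ∀ a u v, act a (u * v) = act a u * act (res a u) v)
    (B6 : ∀ a u v, res a (u * v) = res (res a u) v)
    (B7 : ∀ u, res 1 u = 1)
    (B8 : ∀ a b u, res (a * b) u = res a (act b u) * res b u)
    (hUlcm : ∀ u v : U, (∃ w, IsRCM (· * ·) u v w) → ∃ w, IsRLCM (· * ·) u v w)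
    (hAtot : ∀ a b : A, (∃ c, a * c = b) ∨ (∃ c, b * c = a))
    (hbij : ∀ a : A, Function.Bijective (act a))
    (F : Finset U) (hF : ∀ v : U, ∃ u ∈ F, ∃ w, IsRCM (· * ·) u v w) :
    let zmul : U × A → U × A → U × A :=
      fun p q => (p.1 * act p.2 q.1, res p.2 q.1 * q.2)
    ∀ p : U × A, ∃ u ∈ F, ∃ w, IsRCM zmul (u, (1 : A)) p w :=
  stmt15_general act res B1 B7 hbij F hF
end

section
/- Let U and A satisfy the hypotheses of the Zappa-Szép right LCM lemma. If G is a foundation set in U ⋈ A, then {u ∈ U : (u,a) ∈ G for some a ∈ A} is a foundation set in U. -/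
section ZappaSzep

variable {U A : Type*} [Mul U] [Mul A] (act : A → U → U) (res : A → U → A)

def zappaSzepMul (p q : U × A) : U × A :=
  (p.1 * act p.2 q.1, res p.2 q.1 * q.2)

theorem IsRightMul.fst_of_zappaSzepMul {p r : U × A}
    (h : IsRightMul (zappaSzepMul act res) p r) : IsRightMul (· * ·) p.1 r.1 :=
  let ⟨q, hq⟩ := h
  ⟨act p.2 q.1, congrArg Prod.fst hq⟩

theorem IsRCM.fst_of_zappaSzepMul {p q r : U × A}
    (h : IsRCM (zappaSzepMul act res) p q r) : IsRCM (· * ·) p.1 q.1 r.1 :=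
  ⟨h.1.fst_of_zappaSzepMul act res, h.2.fst_of_zappaSzepMul act res⟩

end ZappaSzep

theorem stmt16_general
    {U A : Type*} [Monoid U] [Monoid A]
    (act : A → U → U) (res : A → U → A)
    (G : Finset (U × A))
    (hG : ∀ p : U × A, ∃ q ∈ G, ∃ w,
      IsRCM (fun p q : U × A => (p.1 * act p.2 q.1, res p.2 q.1 * q.2)) q p w) :
    ∀ v : U, ∃ q ∈ G, ∃ w, IsRCM (· * ·) q.1 v w := by
  intro v
  obtain ⟨q, hq, w, hw⟩ := hG (v, 1)
  exact ⟨q, hq, w.1, hw.fst_of_zappaSzepMul act res⟩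

theorem stmt16
    {U A : Type*} [Monoid U] [Monoid A]
    (hU : ∀ a b c : U, a * b = a * c → b = c)
    (hA : ∀ a b c : A, a * b = a * c → b = c)
    (act : A → U → U) (res : A → U → A)
    (B1 : ∀ u, act 1 u = u)
    (B2 : ∀ a b u, act (a * b) u = act a (act b u))
    (B3 : ∀ a, act a 1 = 1)
    (B4 : ∀ a, res a 1 = a)
    (B5 : ∀ a u v, act a (u * v) = act a u * act (res a u) v)
    (B6 : ∀ a u v, res a (u * v) = res (res a u) v)
    (B7 : ∀ u, res 1 u = 1)
    (B8 : ∀ a b u, res (a * b) u = res a (act b u) * res b u)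
    (hUlcm : ∀ u v : U, (∃ w, IsRCM (· * ·) u v w) → ∃ w, IsRLCM (· * ·) u v w)
    (hAtot : ∀ a b : A, (∃ c, a * c = b) ∨ (∃ c, b * c = a))
    (hbij : ∀ a : A, Function.Bijective (act a))
    (G : Finset (U × A))
    (hG : ∀ p : U × A, ∃ q ∈ G, ∃ w,
      IsRCM (fun p q : U × A => (p.1 * act p.2 q.1, res p.2 q.1 * q.2)) q p w) :
    ∀ v : U, ∃ q ∈ G, ∃ w, IsRCM (· * ·) q.1 v w :=
  stmt16_general act res G hG
end
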